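/- Let A be a finite hoop, F a filter of A with least element l. Then the map ψ: A/F → F defined by ψ(X) = t_X ∨ l (where t_X is the top of the class X) is a product morphism from the quotient hoop A/F to the subhoop F. -/
import Mathlib


/-- A hoop: a commutative monoid with a residuation-like arrow satisfying
(H1) `x → x = 1`, (H2) `(x·y) → z = x → (y → z)`, (H3) `x·(x→y) = y·(y→x)`. -/
class Hoop (α : Type*) extends CommMonoid α where
  arr : α → α → α
  arr_self : ∀ x : α, arr x x = 1
  arr_mul : ∀ x y z : α, arr (x * y) z = arr x (arr y z)
  divis : ∀ x y : α, x * arr x y = y * arr y x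

namespace Hoop

variable {α β γ : Type*} [Hoop α] [Hoop β] [Hoop γ]

/-- The induced order: `x ≤ y` iff `x → y = 1`. -/
def hle (x y : α) : Prop := arr x y = 1

/-- The induced meet: `x ∧ y = x·(x → y)`. -/
def hmeet (x y : α) : α := x * arr x y

/-- `s` is the supremum of `x` and `y` in the induced order of the hoop. -/
def IsSup (x y s : α) : Prop :=
  hle x s ∧ hle y s ∧ ∀ t : α, hle x t → hle y t → hle s t

/-- A filter of a hoop: a nonempty up-set closed under multiplication. -/
def IsFilter (F : Set α) : Prop :=
  F.Nonempty ∧ (∀ x ∈ F, ∀ y : α, hle x y → y ∈ F) ∧ ∀ x ∈ F, ∀ y ∈ F, x * y ∈ F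

/-- The congruence induced by a filter: `x θ_F y` iff `(x→y)·(y→x) ∈ F`. -/
def frel (F : Set α) (x y : α) : Prop := arr x y * arr y x ∈ F

/- ### Auxiliary lemmas -/

lemma mul_arr_eq {x y : α} (h : hle x y) : y * arr y x = x := by
  have hd := divis x y
  rw [h, mul_one] at hd
  exact hd.symm

lemma hle_antisymm {x y : α} (h1 : hle x y) (h2 : hle y x) : x = y := by
  have hd := divis x y
  rwa [h1, h2, mul_one, mul_one] at hd

lemma mul_arr_one (x : α) : x * arr x 1 = arr 1 x := by
  have := divis x 1
  rwa [one_mul] at this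

lemma hle_x_one_arr (x : α) : hle x (arr 1 x) := by
  show arr x (arr 1 x) = 1
  rw [← arr_mul, mul_one, arr_self]

lemma arr_arr_one (x : α) : arr (arr x 1) 1 = 1 := by
  have h0 : arr (arr x 1 * x) (arr x 1 * x) = 1 := arr_self _
  have hax : arr x (arr x 1 * x) = 1 := by
    rw [mul_comm, mul_arr_one]
    exact hle_x_one_arr x
  rw [arr_mul, hax] at h0
  exact h0

lemma one_arr (x : α) : arr 1 x = x := by
  refine hle_antisymm ?_ (hle_x_one_arr x)
  show arr (arr 1 x) x = 1
  rw [← mul_arr_one, mul_comm, arr_mul, arr_self]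
  exact arr_arr_one x

lemma arr_one (x : α) : arr x 1 = 1 := by
  have h : arr (arr x 1 * x) 1 = 1 := by
    rw [arr_mul, arr_self]
  rwa [mul_comm, mul_arr_one, one_arr] at h

lemma hle_one (x : α) : hle x 1 := arr_one x

lemma res {x y z : α} : hle (x * y) z ↔ hle x (arr y z) := by
  unfold hle
  rw [arr_mul]

lemma mul_hle_left {x y : α} : hle (x * y) x := by
  show arr (x * y) x = 1
  rw [mul_comm, arr_mul, arr_self]
  exact arr_one y

lemma mul_hle_right {x y : α} : hle (x * y) y := by
  show arr (x * y) y = 1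
  rw [arr_mul, arr_self]
  exact arr_one x

lemma arr_mul_hle {x y : α} : hle (arr x y * x) y := by
  show arr (arr x y * x) y = 1
  rw [arr_mul]
  exact arr_self _

lemma hle_trans {x y z : α} (h1 : hle x y) (h2 : hle y z) : hle x z := by
  have hx : y * arr y x = x := mul_arr_eq h1
  show arr x z = 1
  have : arr x z = arr (arr y x * y) z := by rw [mul_comm, hx]
  rw [this, arr_mul, h2]
  exact arr_one _

lemma mul_mono_left {x y : α} (h : hle x y) (z : α) : hle (x * z) (y * z) := by
  have hx : x * z = arr y x * (y * z) := by
    rw [← mul_assoc, mul_comm (arr y x) y, mul_arr_eq h]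
  show arr (x * z) (y * z) = 1
  rw [hx, arr_mul, arr_self]
  exact arr_one _

lemma mul_mono_right {x y : α} (h : hle x y) (z : α) : hle (z * x) (z * y) := by
  have := mul_mono_left h z
  rwa [mul_comm x z, mul_comm y z] at this

lemma mul_hle_mul {x y u v : α} (h1 : hle x y) (h2 : hle u v) : hle (x * u) (y * v) :=
  hle_trans (mul_mono_left h1 u) (mul_mono_right h2 y)

lemma arr_mono {a b : α} (h : hle a b) (x : α) : hle (arr x a) (arr x b) :=
  res.mp (hle_trans arr_mul_hle h)

lemma arr_anti {a b : α} (h : hle a b) (c : α) : hle (arr b c) (arr a c) :=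
  res.mp (hle_trans (mul_mono_right h (arr b c)) arr_mul_hle)

lemma hmeet_hle_left {x y : α} : hle (hmeet x y) x := mul_hle_left

lemma hmeet_hle_right {x y : α} : hle (hmeet x y) y := by
  show arr (x * arr x y) y = 1
  rw [mul_comm, arr_mul]
  exact arr_self _

lemma hmeet_glb {x y z : α} (h1 : hle z x) (h2 : hle z y) : hle z (hmeet x y) := by
  have h3 := mul_mono_right (arr_mono h2 x) x
  rwa [mul_arr_eq h1] at h3

/-- In a finite hoop `A` with filter `F` with least element `l`, the map
`ψ : A/F → F`, `ψ(X) = t_X ∨ l` (here written on representatives via the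
top-of-class map `t` and the binary-supremum map `s`) is a product morphism
from the quotient hoop `A/F` to the subhoop `F`. -/
theorem psi_prodMorphism [Fintype α] (F : Set α) (hF : IsFilter F)
    (l : α) (hl : l ∈ F ∧ ∀ a ∈ F, hle l a)
    (t : α → α)
    (ht : ∀ a : α, frel F a (t a) ∧ ∀ c : α, frel F a c → hle c (t a))
    (s : α → α → α) (hs : ∀ a b : α, IsSup a b (s a b)) :
    -- ψ takes values in F
    (∀ a : α, s (t a) l ∈ F) ∧
    -- ψ is well defined on congruence classes
    (∀ a b : α, frel F a b → s (t a) l = s (t b) l) ∧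
    -- ψ(1) = 1
    s (t 1) l = 1 ∧
    -- ψ(X)·ψ(Y) = ψ(X·Y) = ψ(X)∧ψ(Y) = ψ(X∧Y)
    (∀ a b : α,
      s (t a) l * s (t b) l = s (t (a * b)) l ∧
      s (t (a * b)) l = hmeet (s (t a) l) (s (t b) l) ∧
      hmeet (s (t a) l) (s (t b) l) = s (t (hmeet a b)) l) := by
  obtain ⟨-, hFup, hFmul⟩ := hF
  obtain ⟨hlF, hlmin⟩ := hl
  -- l is idempotent
  have hll : l * l = l :=
    hle_antisymm mul_hle_left (hlmin _ (hFmul l hlF l hlF))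
  -- l → (l → x) = l → x
  have hfix : ∀ x : α, arr l (arr l x) = arr l x := by
    intro x
    rw [← arr_mul, hll]
  -- (l → x) * l ≤ x
  have hla : ∀ x : α, hle (arr l x * l) x := fun x => arr_mul_hle
  -- the top of the class of `a` is `l → a`
  have htop : ∀ a : α, t a = arr l a := by
    intro a
    have h2 : hle l (arr (t a) a) :=
      hle_trans (hlmin _ (ht a).1) mul_hle_right
    have h3 : hle (t a * l) a := by
      have h31 := mul_mono_right h2 (t a)
      refine hle_trans h31 ?_
      have h32 : hle (arr (t a) a * t a) a := arr_mul_hle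
      rwa [mul_comm] at h32
    have h4 : hle (t a) (arr l a) := res.mp h3
    have h5 : frel F a (arr l a) := by
      have e1 : arr a (arr l a) = 1 := res.mp mul_hle_left
      have e2 : hle l (arr (arr l a) a) := by
        refine res.mp ?_
        have := hla a
        rwa [mul_comm] at this
      show arr a (arr l a) * arr (arr l a) a ∈ F
      rw [e1, one_mul]
      exact hFup l hlF _ e2
    exact hle_antisymm h4 ((ht a).2 _ h5)
  -- sup facts
  have hsle1 : ∀ x y : α, hle x (s x y) := fun x y => (hs x y).1
  have hsle2 : ∀ x y : α, hle y (s x y) := fun x y => (hs x y).2.1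
  have hsub : ∀ x y z : α, hle x z → hle y z → hle (s x y) z :=
    fun x y z h1 h2 => (hs x y).2.2 z h1 h2
  -- Lemma P : (x ∨ l)(y ∨ l) = (xy) ∨ l
  have hP : ∀ x y : α, s x l * s y l = s (x * y) l := by
    intro x y
    refine hle_antisymm ?_ ?_
    · refine res.mpr (hsub x l _ ?_ ?_)
      · refine res.mp ?_
        rw [mul_comm x (s y l)]
        refine res.mpr (hsub y l _ ?_ ?_)
        · refine res.mp ?_
          rw [mul_comm y x]
          exact hsle1 (x * y) l
        · exact res.mp (hle_trans mul_hle_left (hsle2 _ _))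
      · exact res.mp (hle_trans mul_hle_left (hsle2 _ _))
    · refine hsub _ _ _ (mul_hle_mul (hsle1 x l) (hsle1 y l)) ?_
      have := mul_hle_mul (hsle2 x l) (hsle2 y l)
      rwa [hll] at this
  -- well-definedness on classes
  have hwd1 : ∀ a b : α, hle l (arr a b) → hle (arr l a) (arr l b) := by
    intro a b h
    refine res.mp ?_
    have e : arr l a * l = arr l a * l * l := by rw [mul_assoc, hll]
    rw [e]
    exact hle_trans (mul_mono_left (hla a) l)
      (hle_trans (mul_mono_right h a) hmeet_hle_right)
  -- sup monotone
  have hsmono : ∀ x y : α, hle x y → hle (s x l) (s y l) :=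
    fun x y h => hsub _ _ _ (hle_trans h (hsle1 y l)) (hsle2 y l)
  -- the TOP lemma : l→x ≤ ((l→x)·(l→x)) ∨ l
  have hTOP : ∀ x : α, hle (arr l x) (s (arr l x * arr l x) l) := by
    intro x
    have h1 : hle (arr l x) (s (arr l x) l * arr l x) := by
      have e1 : s (arr l x) l * arr (s (arr l x) l) (arr l x) = arr l x :=
        mul_arr_eq (hsle1 (arr l x) l)
      have e2 : hle (arr (s (arr l x) l) (arr l x)) (arr l (arr l x)) :=
        arr_anti (hsle2 (arr l x) l) (arr l x)
      have e3 := mul_mono_right e2 (s (arr l x) l)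
      rw [e1, hfix x] at e3
      exact e3
    have h2 : hle (s (arr l x) l * arr l x)
        (s (arr l x) l * (s (arr l x) l * arr l x)) :=
      mul_mono_right h1 _
    have h3 : hle (s (arr l x) l * (s (arr l x) l * arr l x))
        (s (arr l x) l * s (arr l x) l) := by
      rw [← mul_assoc]
      exact mul_hle_left
    have h4 := hle_trans h1 (hle_trans h2 h3)
    rwa [hP] at h4
  -- ψ is idempotent
  have hidem : ∀ x : α, s (arr l x) l * s (arr l x) l = s (arr l x) l := by
    intro x
    rw [hP]
    refine hle_antisymm ?_ ?_
    · exact hsub _ _ _ (hle_trans mul_hle_left (hsle1 _ _)) (hsle2 _ _)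
    · exact hsub _ _ _ (hTOP x) (hsle2 _ _)
  -- meet with an idempotent is product
  have hidmeet : ∀ e x : α, e * e = e → hmeet e x = e * x := by
    intro e x he
    refine hle_antisymm ?_ ?_
    · have e1 : (hmeet e x : α) = e * hmeet e x := by
        show e * arr e x = e * (e * arr e x)
        rw [← mul_assoc, he]
      rw [e1]
      exact mul_mono_right hmeet_hle_right e
    · exact hmeet_glb mul_hle_left mul_hle_right
  refine ⟨?_, ?_, ?_, ?_⟩
  · exact fun a => hFup l hlF _ (hsle2 _ _)
  · intro a b h
    have hba : frel F b a := by
      unfold frel at h ⊢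
      rwa [mul_comm] at h
    have : arr l a = arr l b :=
      hle_antisymm
        (hwd1 a b (hle_trans (hlmin _ h) mul_hle_left))
        (hwd1 b a (hle_trans (hlmin _ hba) mul_hle_left))
    rw [htop a, htop b, this]
  · rw [htop 1, arr_one]
    exact hle_antisymm (hle_one _) (hsle1 1 l)
  · intro a b
    rw [htop a, htop b, htop (a * b), htop (hmeet a b)]
    -- abbreviations via facts
    have hGA : hle (arr l (a * b)) (arr l a) := arr_mono mul_hle_left l
    have hGB : hle (arr l (a * b)) (arr l b) := arr_mono mul_hle_right l
    have hABG : hle (arr l a * arr l b) (arr l (a * b)) := by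
      refine res.mp ?_
      have e : arr l a * l * (arr l b * l) = arr l a * arr l b * l := by
        rw [mul_mul_mul_comm, hll]
      rw [← e]
      exact mul_hle_mul (hla a) (hla b)
    have hGle : hle (arr l (a * b)) (s (arr l a * arr l b) l) :=
      hle_trans (hTOP (a * b)) (hsmono _ _ (mul_hle_mul hGA hGB))
    have hseq : s (arr l (a * b)) l = s (arr l a * arr l b) l :=
      hle_antisymm (hsub _ _ _ hGle (hsle2 _ _))
        (hsub _ _ _ (hle_trans hABG (hsle1 _ _)) (hsle2 _ _))
    have hm1 : hmeet (s (arr l a) l) (s (arr l b) l) = s (arr l a * arr l b) l := by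
      rw [hidmeet _ _ (hidem a), hP]
    have hdist : arr l (hmeet a b) = hmeet (arr l a) (arr l b) := by
      refine hle_antisymm ?_ ?_
      · exact hmeet_glb (arr_mono hmeet_hle_left l) (arr_mono hmeet_hle_right l)
      · refine res.mp (hmeet_glb ?_ ?_)
        · exact hle_trans (mul_mono_left hmeet_hle_left l) (hla a)
        · exact hle_trans (mul_mono_left hmeet_hle_right l) (hla b)
    have hm2 : hle (hmeet (arr l a) (arr l b)) (s (arr l a * arr l b) l) := by
      have h0 := hmeet_glb
        (hle_trans (hmeet_hle_left (x := arr l a) (y := arr l b)) (hsle1 (arr l a) l))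
        (hle_trans (hmeet_hle_right (x := arr l a) (y := arr l b)) (hsle1 (arr l b) l))
      rwa [hm1] at h0
    have hm3 : s (arr l a * arr l b) l = s (hmeet (arr l a) (arr l b)) l :=
      hle_antisymm
        (hsub _ _ _ (hle_trans (hmeet_glb mul_hle_left mul_hle_right) (hsle1 _ _)) (hsle2 _ _))
        (hsub _ _ _ hm2 (hsle2 _ _))
    refine ⟨?_, ?_, ?_⟩
    · rw [hP, hseq]
    · rw [hseq, hm1]
    · rw [hdist, hm1, hm3]

end Hoop
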